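/- The cycle graph C_t on t ≥ 3 vertices is unmixed (all maximal independent sets of C_t have the same cardinality) if and only if t ∈ {3, 4, 5, 7}. -/

import Mathlib

/-- `A` is an independent set of the simple graph `G`. -/
def IsIndep {V : Type*} (G : SimpleGraph V) (A : Set V) : Prop :=
  ∀ a ∈ A, ∀ b ∈ A, ¬ G.Adj a b

/-- `A` is a maximal independent set of `G`. -/
def IsMaxIndep {V : Type*} (G : SimpleGraph V) (A : Set V) : Prop :=
  IsIndep G A ∧ ∀ B : Set V, IsIndep G B → A ⊆ B → B = A

/-- `G` is unmixed: all maximal independent sets have the same cardinality. -/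
def Unmixed {V : Type*} (G : SimpleGraph V) : Prop :=
  ∀ A B : Set V, IsMaxIndep G A → IsMaxIndep G B → A.ncard = B.ncard

/-!
A set of vertices of `C_t` is a maximal independent set whenever, going around the cycle,
consecutive members are 2 or 3 steps apart. So each way of writing `t = 3 r + 2 s` yields a
maximal independent set of size `r + s`. For `t ≥ 6` with `t ≠ 7` there are two such ways with
different `r + s` (take `r = t % 2` and `r = t % 2 + 2`); for `t ∈ {3, 4, 5, 7}` an exhaustive
check shows that all maximal independent sets have the same size.
-/

open SimpleGraph

lemma cycleGraph_adj_iff_val {t : ℕ} (ht : t ≠ 1) {u v : Fin t} :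
    (cycleGraph t).Adj u v ↔ u.val + 1 = v.val ∨ v.val + 1 = u.val ∨
      (u.val + 1 = t ∧ v.val = 0) ∨ (v.val + 1 = t ∧ u.val = 0) := by
  have hu := u.isLt
  have hv := v.isLt
  rw [cycleGraph_adj']
  rcases lt_trichotomy u v with h | rfl | h
  · rw [Fin.coe_sub_iff_lt.mpr h, Fin.coe_sub_iff_le.mpr h.le]
    rw [Fin.lt_def] at h
    omega
  · rw [Fin.coe_sub_iff_le.mpr le_rfl]
    omega
  · rw [Fin.coe_sub_iff_le.mpr h.le, Fin.coe_sub_iff_lt.mpr h]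
    rw [Fin.lt_def] at h
    omega

lemma isMaxIndep_iff_isIndep_and_dominating {V : Type*} {G : SimpleGraph V} {A : Set V} :
    IsMaxIndep G A ↔ IsIndep G A ∧ ∀ b ∉ A, ∃ a ∈ A, G.Adj a b := by
  refine ⟨fun hA => ⟨hA.1, fun b hb => ?_⟩, fun ⟨hA, hdom⟩ => ⟨hA, fun B hB hAB => ?_⟩⟩
  · by_contra! hc
    refine hb (hA.2 (insert b A) ?_ (Set.subset_insert b A) ▸ Set.mem_insert b A)
    rintro x (rfl | hx) y (rfl | hy)
    · exact G.loopless.irrefl _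
    · exact fun h => hc y hy h.symm
    · exact hc x hx
    · exact hA.1 x hx y hy
  · refine (Set.Subset.antisymm (fun b hb => ?_) hAB)
    by_contra hbA
    obtain ⟨a, ha, hab⟩ := hdom b hbA
    exact hB a (hAB ha) b hb hab

lemma isMaxIndep_cycleGraph_setOf {t : ℕ} (ht : t ≠ 1) (P : ℕ → Prop)
    (hindep : ∀ a < t, ∀ b < t, P a → P b → a + 1 ≠ b ∧ (a + 1 = t → b ≠ 0))
    (hdom : ∀ b < t, ¬ P b → 0 < b ∧ P (b - 1) ∨ b + 1 < t ∧ P (b + 1) ∨ b + 1 = t ∧ P 0) :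
    IsMaxIndep (cycleGraph t) {v | P v.val} := by
  refine isMaxIndep_iff_isIndep_and_dominating.mpr ⟨fun u hu v hv huv => ?_, fun v hv => ?_⟩
  · have := hindep u u.isLt v v.isLt hu hv
    have := hindep v v.isLt u u.isLt hv hu
    rw [cycleGraph_adj_iff_val ht] at huv
    omega
  · have hvt := v.isLt
    rcases hdom v hvt hv with ⟨hv0, hP⟩ | ⟨hvt', hP⟩ | ⟨hvt', hP⟩
    · exact ⟨⟨v - 1, by omega⟩, hP, (cycleGraph_adj_iff_val ht).mpr (by dsimp only; omega)⟩
    · exact ⟨⟨v + 1, hvt'⟩, hP, (cycleGraph_adj_iff_val ht).mpr (by dsimp only; omega)⟩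
    · exact ⟨⟨0, by omega⟩, hP, (cycleGraph_adj_iff_val ht).mpr (by dsimp only; omega)⟩

/-- The vertices `0, 3, …, 3 (r - 1)` followed by every second vertex from `3 r` on: on a cycle
of length `3 r + 2 s` consecutive members are `3` apart `r` times and `2` apart `s` times. -/
def gapSet (t r : ℕ) : Set (Fin t) :=
  {v | v.val < 3 * r ∧ v.val % 3 = 0 ∨ 3 * r ≤ v.val ∧ (v.val - 3 * r) % 2 = 0}

lemma isMaxIndep_gapSet {t r s : ℕ} (ht : t = 3 * r + 2 * s) :
    IsMaxIndep (cycleGraph t) (gapSet t r) :=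
  isMaxIndep_cycleGraph_setOf (by omega)
    (fun i => i < 3 * r ∧ i % 3 = 0 ∨ 3 * r ≤ i ∧ (i - 3 * r) % 2 = 0)
    (fun a ha b hb => by omega) (fun b hb => by omega)

-- The `k`-th member is `3 k` for `k ≤ r` and `3 r + 2 (k - r)` afterwards.
lemma gapSet_eq_range {t r s : ℕ} (ht : t = 3 * r + 2 * s) :
    gapSet t r =
      Set.range fun k : Fin (r + s) => (⟨min (3 * k) (2 * k + r), by omega⟩ : Fin t) := by
  ext v
  simp only [gapSet, Set.mem_ofPred_eq, Set.mem_range, Fin.ext_iff]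
  have hvt := v.isLt
  constructor
  · intro hv
    exact ⟨⟨if v.val < 3 * r then v.val / 3 else r + (v.val - 3 * r) / 2, by split_ifs <;> omega⟩,
      by dsimp only; split_ifs <;> omega⟩
  · rintro ⟨k, hk⟩
    have := k.isLt
    omega

lemma ncard_gapSet {t r s : ℕ} (ht : t = 3 * r + 2 * s) : (gapSet t r).ncard = r + s := by
  rw [gapSet_eq_range ht, Set.ncard_range_of_injective, Nat.card_fin]
  intro k l hkl
  simp only [Fin.ext_iff] at hkl
  omega

lemma not_unmixed_cycleGraph {t : ℕ} (h6 : 6 ≤ t) (h7 : t ≠ 7) :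
    ¬ Unmixed (cycleGraph t) := by
  intro hU
  obtain ⟨s, hs⟩ : ∃ s, t = 3 * (t % 2) + 2 * s := ⟨(t - 3 * (t % 2)) / 2, by omega⟩
  have hs' : t = 3 * (t % 2 + 2) + 2 * (s - 3) := by omega
  have h := hU _ _ (isMaxIndep_gapSet hs) (isMaxIndep_gapSet hs')
  rw [ncard_gapSet hs, ncard_gapSet hs'] at h
  omega

lemma unmixed_of_forall_card_eq {V : Type*} [Fintype V] {G : SimpleGraph V} (k : ℕ)
    (h : ∀ A : Finset V, (∀ a ∈ A, ∀ b ∈ A, ¬ G.Adj a b) →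
      (∀ b, b ∉ A → ∃ a ∈ A, G.Adj a b) → A.card = k) :
    Unmixed G := by
  suffices hk : ∀ A : Set V, IsMaxIndep G A → A.ncard = k from
    fun A B hA hB => (hk A hA).trans (hk B hB).symm
  intro A hA
  rw [isMaxIndep_iff_isIndep_and_dominating] at hA
  rw [Set.ncard_eq_toFinset_card A (Set.toFinite A)]
  exact h _ (by simpa [IsIndep] using hA.1) (by simpa using hA.2)

set_option maxRecDepth 4000 in
lemma unmixed_cycleGraph_of_mem {t : ℕ} (ht : t ∈ ({3, 4, 5, 7} : Set ℕ)) :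
    Unmixed (cycleGraph t) := by
  rcases ht with rfl | rfl | rfl | rfl
  · exact unmixed_of_forall_card_eq 1 (by decide)
  · exact unmixed_of_forall_card_eq 2 (by decide)
  · exact unmixed_of_forall_card_eq 2 (by decide)
  · exact unmixed_of_forall_card_eq 3 (by decide)

/-- The cycle `C_t` (`t ≥ 3`) is unmixed if and only if `t ∈ {3,4,5,7}`. -/
theorem cycle_unmixed_iff (t : ℕ) (ht : 3 ≤ t) :
    Unmixed (SimpleGraph.cycleGraph t) ↔ t ∈ ({3, 4, 5, 7} : Set ℕ) := by
  refine ⟨fun hU => ?_, unmixed_cycleGraph_of_mem⟩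
  by_contra hmem
  simp only [Set.mem_insert_iff, Set.mem_singleton_iff, not_or] at hmem
  exact not_unmixed_cycleGraph (by omega) hmem.2.2.2 hU
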